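/- arXiv:2405.15510 — 2 statements merged into one kernel-verified Lean document; each statement's English description precedes it below -/
import Mathlib

section
/- Let M ⊆ L be a primitive sublattice of a lattice L, and let v ∈ M be a primitive vector of M. Then div(v, L) = γ if and only if v is a primitive element of the lattice γL^∨ (where γL^∨ is viewed as a lattice inside L ⊗ ℚ containing γL). -/
open Pointwise

/-- The dual lattice `L^∨ ⊆ L ⊗ ℚ = V`, as a set:
all vectors pairing integrally with every element of `L`. -/
def dualSet {V : Type*} [AddCommGroup V] [Module ℚ V]
    (B : V →ₗ[ℚ] V →ₗ[ℚ] ℚ) (L : Submodule ℤ V) : Set V :=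
  {x | ∀ l ∈ L, ∃ n : ℤ, B x l = (n : ℚ)}

/-- `v` is a primitive vector of `S`: it lies in `S` and is not a nontrivial
integer multiple of another vector of `S`. -/
def PrimVec {V : Type*} [AddCommGroup V] [Module ℚ V] (S : Set V) (v : V) : Prop :=
  v ∈ S ∧ ∀ (n : ℤ) (w : V), w ∈ S → v = n • w → IsUnit n

/-- `M` is a primitive sublattice of `L`: `M ≤ L` and `L/M` is torsion-free. -/
def PrimSub {V : Type*} [AddCommGroup V] [Module ℚ V] (M L : Submodule ℤ V) : Prop :=
  M ≤ L ∧ ∀ (n : ℤ), n ≠ 0 → ∀ x ∈ L, n • x ∈ M → x ∈ M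

/-- `div(v, L) = γ`: `γ` is the positive generator of the ideal `b(v, L) ⊆ ℤ`. -/
def DivIs {V : Type*} [AddCommGroup V] [Module ℚ V]
    (B : V →ₗ[ℚ] V →ₗ[ℚ] ℚ) (L : Submodule ℤ V) (v : V) (γ : ℤ) : Prop :=
  (∀ l ∈ L, ∃ k : ℤ, B v l = (γ : ℚ) * (k : ℚ)) ∧ ∃ l ∈ L, B v l = (γ : ℚ)

/-!
Membership `v ∈ γL^∨` says exactly that `γ` divides every value `b(v, l)`, `l ∈ L`. These values
form an ideal of `ℤ`, generated by some `g`, which is nonzero because `b` is nondegenerate and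
`L` spans `V`. If `v ∈ γL^∨` then `g = γk`, and `k⁻¹ • v` still lies in `γL^∨`; so primitivity of
`v` there forces `k = ±1`, i.e. `div(v, L) = γ`. Conversely `div(v, L) = γ` gives a pairing
`b(v, l) = γ`, which rules out writing `v = n • w` with `w ∈ γL^∨` unless `n = ±1`.
-/

section

variable {V : Type*} [AddCommGroup V] [Module ℚ V] {B : V →ₗ[ℚ] V →ₗ[ℚ] ℚ}
  {L : Submodule ℤ V} {v : V}

theorem PrimVec.ne_zero {S : Set V} (h : PrimVec S v) : v ≠ 0 := by
  rintro rfl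
  have h2 : IsUnit (2 : ℤ) := h.2 2 0 h.1 (by simp)
  simp [Int.isUnit_iff] at h2

theorem mem_smul_dualSet_iff {c : ℚ} (hc : c ≠ 0) {u : V} :
    u ∈ c • dualSet B L ↔ ∀ l ∈ L, ∃ k : ℤ, B u l = c * k := by
  simp only [Set.mem_smul_set_iff_inv_smul_mem₀ hc, dualSet, Set.mem_ofPred_eq, map_smul,
    LinearMap.smul_apply, smul_eq_mul, inv_mul_eq_iff_eq_mul₀ hc]

theorem exists_apply_ne_zero_of_span_eq_top (hnondeg : ∀ x, (∀ y, B x y = 0) → x = 0)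
    (hspan : Submodule.span ℚ (L : Set V) = ⊤) (hv : v ≠ 0) : ∃ l ∈ L, B v l ≠ 0 := by
  by_contra! h
  have hBv : B v = 0 := LinearMap.ext_on hspan h
  exact hv (hnondeg v fun y => by rw [hBv, LinearMap.zero_apply])

namespace DivIs

theorem neg {γ : ℤ} (h : DivIs B L v γ) : DivIs B L v (-γ) := by
  obtain ⟨hdvd, l, hl, hlγ⟩ := h
  refine ⟨fun l' hl' => ?_, -l, L.neg_mem hl, by simp [hlγ]⟩
  obtain ⟨k, hk⟩ := hdvd l' hl'
  exact ⟨-k, by rw [hk]; push_cast; ring⟩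

theorem primVec {γ : ℤ} (h : DivIs B L v γ) (hγ : γ ≠ 0) :
    PrimVec ((γ : ℚ) • dualSet B L) v := by
  have hγQ : (γ : ℚ) ≠ 0 := Int.cast_ne_zero.2 hγ
  refine ⟨(mem_smul_dualSet_iff hγQ).2 h.1, ?_⟩
  rintro n w hw rfl
  obtain ⟨l, hl, hlγ⟩ := h.2
  obtain ⟨k, hk⟩ := (mem_smul_dualSet_iff hγQ).1 hw l hl
  rw [map_zsmul, LinearMap.smul_apply, hk, zsmul_eq_mul] at hlγ
  have hnk : ((n * k : ℤ) : ℚ) = 1 := by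
    push_cast
    exact (mul_right_inj' hγQ).1 (by linear_combination hlγ)
  exact IsUnit.of_mul_eq_one k (by exact_mod_cast hnk)

theorem of_primVec {g γ : ℤ} (hg : DivIs B L v g) (hg0 : g ≠ 0) (hγ : γ ≠ 0)
    (hprim : PrimVec ((γ : ℚ) • dualSet B L) v) : DivIs B L v γ := by
  have hγQ : (γ : ℚ) ≠ 0 := Int.cast_ne_zero.2 hγ
  obtain ⟨l, hl, hlg⟩ := hg.2
  obtain ⟨k, hk⟩ := (mem_smul_dualSet_iff hγQ).1 hprim.1 l hl
  have hgk : g = γ * k := by exact_mod_cast hlg.symm.trans hk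
  have hkQ : (k : ℚ) ≠ 0 := Int.cast_ne_zero.2 (right_ne_zero_of_mul (hgk ▸ hg0))
  have hw : (k : ℚ)⁻¹ • v ∈ (γ : ℚ) • dualSet B L := by
    refine (mem_smul_dualSet_iff hγQ).2 fun l' hl' => ?_
    obtain ⟨j, hj⟩ := hg.1 l' hl'
    refine ⟨j, ?_⟩
    rw [map_smul, LinearMap.smul_apply, smul_eq_mul, hj, hgk]
    push_cast
    field_simp
  have hvk : v = k • (k : ℚ)⁻¹ • v := by
    rw [← Int.cast_smul_eq_zsmul ℚ, smul_smul, mul_inv_cancel₀ hkQ, one_smul]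
  rcases Int.isUnit_iff.1 (hprim.2 k _ hw hvk) with rfl | rfl
  · simpa [hgk] using hg
  · simpa [hgk] using hg.neg

end DivIs

theorem exists_divIs (hv : v ∈ dualSet B L) (hne : ∃ l ∈ L, B v l ≠ 0) :
    ∃ g, g ≠ 0 ∧ DivIs B L v g := by
  let J : Ideal ℤ :=
    Submodule.comap (Algebra.linearMap ℤ ℚ) (L.map ((B v).restrictScalars ℤ))
  have hJ : ∀ m : ℤ, m ∈ J ↔ ∃ l ∈ L, B v l = m := by simp [J]
  obtain ⟨g, hJg⟩ := (IsPrincipalIdealRing.principal J).principal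
  have hdiv : DivIs B L v g := by
    refine ⟨fun l hl => ?_, (hJ g).1 (hJg ▸ Ideal.mem_span_singleton_self g)⟩
    obtain ⟨n, hn⟩ := hv l hl
    obtain ⟨k, rfl⟩ := Ideal.mem_span_singleton.1 (hJg ▸ (hJ n).2 ⟨l, hl, hn⟩)
    exact ⟨k, by rw [hn]; push_cast; rfl⟩
  refine ⟨g, ?_, hdiv⟩
  rintro rfl
  obtain ⟨l, hl, hBl⟩ := hne
  obtain ⟨k, hk⟩ := hdiv.1 l hl
  exact hBl (by simpa using hk)

end

theorem stmt_2_general {V : Type*} [AddCommGroup V] [Module ℚ V]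
    (B : V →ₗ[ℚ] V →ₗ[ℚ] ℚ)
    (hnondeg : ∀ x, (∀ y, B x y = 0) → x = 0)
    (L M : Submodule ℤ V)
    (hspan : Submodule.span ℚ (L : Set V) = ⊤)
    (hint : ∀ x ∈ L, ∀ y ∈ L, ∃ n : ℤ, B x y = (n : ℚ))
    (hM : PrimSub M L) (v : V) (hv : PrimVec (M : Set V) v)
    (γ : ℤ) (hγ : 0 < γ) :
    DivIs B L v γ ↔ PrimVec ((γ : ℚ) • dualSet B L) v := by
  refine ⟨fun h => h.primVec hγ.ne', fun hprim => ?_⟩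
  have hvL : v ∈ L := hM.1 hv.1
  obtain ⟨g, hg0, hg⟩ := exists_divIs (hint v hvL)
    (exists_apply_ne_zero_of_span_eq_top hnondeg hspan hv.ne_zero)
  exact hg.of_primVec hg0 hγ.ne' hprim

/-- for `v` a primitive vector of a primitive sublattice `M ⊆ L`,
`div(v, L) = γ` iff `v` is a primitive element of the lattice `γL^∨`. -/
theorem stmt_2 {V : Type*} [AddCommGroup V] [Module ℚ V]
    (B : V →ₗ[ℚ] V →ₗ[ℚ] ℚ)
    (hsymm : ∀ x y, B x y = B y x)
    (hnondeg : ∀ x, (∀ y, B x y = 0) → x = 0)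
    (L M : Submodule ℤ V) (hfg : L.FG)
    (hspan : Submodule.span ℚ (L : Set V) = ⊤)
    (hint : ∀ x ∈ L, ∀ y ∈ L, ∃ n : ℤ, B x y = (n : ℚ))
    (hM : PrimSub M L) (v : V) (hv : PrimVec (M : Set V) v)
    (γ : ℤ) (hγ : 0 < γ) :
    DivIs B L v γ ↔ PrimVec ((γ : ℚ) • dualSet B L) v :=
  stmt_2_general B hnondeg L M hspan hint hM v hv γ hγ
end

section
/- Let N be the rank 3 lattice with Gram matrix [[4, 2, −2], [2, −2, −1], [−2, −1, 2]]. Then the quadratic space N ⊗ ℚ₂ over the 2-adic numbers contains no nonzero isotropic vector. Consequently N contains no sublattice isometric to U(k) for any k ≥ 1, where U(k) is the hyperbolic plane rescaled by k. -/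
/-!
A nonzero vector of `ℚ₂³` can be rescaled so that its coordinates are `2`-adic integers, one
of them equal to `1`. Reducing an isotropic vector so rescaled modulo `8` gives a zero of the
Gram form mod `8` with a coordinate equal to `1`, and a finite check shows there is none.
An isotropic vector of `N` is isotropic over `ℚ₂`, hence zero, whereas a copy of `U(k)`
would contain a nonzero one.
-/

/-- The Gram matrix `[[4, 2, -2], [2, -2, -1], [-2, -1, 2]]`. -/
def gN3 : Matrix (Fin 3) (Fin 3) ℤ := !![4, 2, -2; 2, -2, -1; -2, -1, 2]

/-- The bilinear form of `gN3` on `ℤ³`. -/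
def bfN3 (x y : Fin 3 → ℤ) : ℤ := dotProduct x (Matrix.mulVec gN3 y)

/-- The bilinear form of `gN3` extended to `ℚ₂³`. -/
noncomputable def bfN3Q2 (x y : Fin 3 → ℚ_[2]) : ℚ_[2] :=
  dotProduct x (Matrix.mulVec (gN3.map (Int.cast : ℤ → ℚ_[2])) y)

open Matrix

theorem RingHom.map_dotProduct_intCast_mulVec {ι R S : Type*} [Fintype ι] [CommRing R]
    [CommRing S] (f : R →+* S) (A : Matrix ι ι ℤ) (v w : ι → R) :
    f (v ⬝ᵥ A.map (↑) *ᵥ w) = (f ∘ v) ⬝ᵥ A.map (↑) *ᵥ (f ∘ w) := by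
  simp only [dotProduct, mulVec, map_sum, map_mul, Function.comp_apply, map_apply, map_intCast]

namespace Padic

variable {p : ℕ} [Fact p.Prime] {ι : Type*}

theorem exists_mul_eq_padicInt_eq_one [Finite ι] {x : ι → ℚ_[p]} (hx : x ≠ 0) :
    ∃ (t : ℚ_[p]) (y : ι → ℤ_[p]) (i : ι), (∀ j, (y j : ℚ_[p]) = t * x j) ∧ y i = 1 := by
  obtain ⟨j, hj⟩ : ∃ j, x j ≠ 0 := Function.ne_iff.mp hx
  have : Nonempty ι := ⟨j⟩
  obtain ⟨i, hi⟩ := Finite.exists_max fun j ↦ ‖x j‖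
  have hxi : x i ≠ 0 := by
    rw [← norm_pos_iff] at hj ⊢
    exact hj.trans_le (hi j)
  have hy (j : ι) : ‖(x i)⁻¹ * x j‖ ≤ 1 := by
    rw [norm_mul, norm_inv, inv_mul_le_one₀ (norm_pos_iff.mpr hxi)]
    exact hi j
  exact ⟨(x i)⁻¹, fun j ↦ ⟨_, hy j⟩, i, fun _ ↦ rfl, Subtype.ext (inv_mul_cancel₀ hxi)⟩

theorem eq_zero_of_dotProduct_intCast_mulVec_eq_zero [Fintype ι] (A : Matrix ι ι ℤ) (k : ℕ)
    (hA : ∀ y : ι → ZMod (p ^ k), (∃ i, y i = 1) → y ⬝ᵥ A.map (↑) *ᵥ y ≠ 0)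
    {x : ι → ℚ_[p]} (hx : x ⬝ᵥ A.map (↑) *ᵥ x = 0) : x = 0 := by
  by_contra hne
  obtain ⟨t, y, i, hyx, hyi⟩ := exists_mul_eq_padicInt_eq_one hne
  have hy : y ⬝ᵥ A.map (↑) *ᵥ y = 0 := by
    have hcoe : PadicInt.Coe.ringHom ∘ y = t • x := funext hyx
    have hmap := PadicInt.Coe.ringHom.map_dotProduct_intCast_mulVec A y y
    rw [hcoe, mulVec_smul, dotProduct_smul, smul_dotProduct, hx, smul_zero, smul_zero] at hmap
    exact (map_eq_zero_iff _ Subtype.val_injective).mp hmap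
  refine hA (PadicInt.toZModPow k ∘ y) ⟨i, by simp [hyi]⟩ ?_
  rw [← RingHom.map_dotProduct_intCast_mulVec, hy, map_zero]

end Padic

-- Modulo `4` this fails: `(1, 0, 0)` is isotropic mod `4`.
theorem gN3_dotProduct_mulVec_ne_zero_mod_eight (y : Fin 3 → ZMod (2 ^ 3))
    (hy : ∃ i, y i = 1) : y ⬝ᵥ gN3.map (↑) *ᵥ y ≠ 0 := by
  have hmod8 : ∀ a b c : ZMod 8, (a = 1 ∨ b = 1 ∨ c = 1) →
      4 * a ^ 2 + 4 * a * b - 4 * a * c - 2 * b ^ 2 - 2 * b * c + 2 * c ^ 2 ≠ 0 := by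
    decide
  have hexpand : y ⬝ᵥ gN3.map (↑) *ᵥ y =
      4 * y 0 ^ 2 + 4 * y 0 * y 1 - 4 * y 0 * y 2 - 2 * y 1 ^ 2 - 2 * y 1 * y 2 + 2 * y 2 ^ 2 := by
    simp [gN3, dotProduct, mulVec, Fin.sum_univ_three]
    ring
  obtain ⟨i, hi⟩ := hy
  rw [hexpand]
  apply hmod8
  fin_cases i <;> simp_all

theorem bfN3Q2_eq_zero_of_self_eq_zero {x : Fin 3 → ℚ_[2]} (hx : bfN3Q2 x x = 0) : x = 0 :=
  Padic.eq_zero_of_dotProduct_intCast_mulVec_eq_zero gN3 3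
    gN3_dotProduct_mulVec_ne_zero_mod_eight hx

theorem bfN3_eq_zero_of_self_eq_zero {e : Fin 3 → ℤ} (he : bfN3 e e = 0) : e = 0 := by
  have hcast : bfN3Q2 ((↑) ∘ e) ((↑) ∘ e) = ((bfN3 e e : ℤ) : ℚ_[2]) := by
    simp [bfN3Q2, bfN3, dotProduct, mulVec]
  rw [he, Int.cast_zero] at hcast
  funext i
  simpa using congrFun (bfN3Q2_eq_zero_of_self_eq_zero hcast) i

/-- the quadratic space `N ⊗ ℚ₂` of the rank 3 lattice `N` with Gram
matrix `[[4,2,-2],[2,-2,-1],[-2,-1,2]]` has no nonzero isotropic vector over the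
2-adic numbers; consequently `N` contains no sublattice isometric to `U(k)`, `k ≥ 1`. -/
theorem stmt_9 :
    (∀ x : Fin 3 → ℚ_[2], bfN3Q2 x x = 0 → x = 0) ∧
      ¬∃ (k : ℤ) (e f : Fin 3 → ℤ), 1 ≤ k ∧ LinearIndependent ℤ ![e, f] ∧
          bfN3 e e = 0 ∧ bfN3 f f = 0 ∧ bfN3 e f = k := by
  refine ⟨fun _ ↦ bfN3Q2_eq_zero_of_self_eq_zero, ?_⟩
  rintro ⟨k, e, f, -, hli, hee, -, -⟩
  simpa [bfN3_eq_zero_of_self_eq_zero hee] using hli.ne_zero 0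
end
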